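/- Let χ : A⊗B → B⊗A and ϖ : A⊗C → C⊗A be twisting maps with B, C finite dimensional with bases B = {b_1,…,b_n}, C = {c_1,…,c_m}, and let f : B → C be an algebra homomorphism. Then f⊗id_A : B⊗_χ A → C⊗_ϖ A is an algebra homomorphism if and only if φ_ϖ(a)·M = M·φ_χ(a) for all a ∈ A, where M ∈ M_{m×n}(A) is the matrix of f with respect to the bases (with entries scalar multiples of 1_A), and φ_χ, φ_ϖ are the associated matrix representations. -/

import Mathlib

/-! The product of `B ⊗_χ A` is `(b ⊗ a)(b' ⊗ a') = (b ⊗ 1) χ(a ⊗ b') (1 ⊗ a')`, so `f ⊗ id`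
is multiplicative exactly when it intertwines the twisting maps, `(f ⊗ id) ∘ χ = ϖ ∘ (id ⊗ f)`;
unitality is automatic. Evaluating both sides on `a ⊗ b_i` and reading off the coefficient of `c_l`
gives `∑ j, ζ l j • γ i j a = ∑ k, ζ k i • tγ k l a`, the `(l, i)` entry of `φ_ϖ(a) M = M φ_χ(a)`. -/

open TensorProduct LinearMap

variable (K : Type*)

def IsTwistingMap {A B : Type*} [Field K] [Ring A] [Ring B] [Algebra K A] [Algebra K B]
    (χ : A ⊗[K] B →ₗ[K] B ⊗[K] A) : Prop :=
  (∀ b : B, χ ((1 : A) ⊗ₜ[K] b) = b ⊗ₜ[K] (1 : A)) ∧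
  (∀ a : A, χ (a ⊗ₜ[K] (1 : B)) = (1 : B) ⊗ₜ[K] a) ∧
  (∀ (a a' : A) (b : B),
    χ ((a * a') ⊗ₜ[K] b) =
      lTensor B (mul' K A)
        (TensorProduct.assoc K B A A
          (rTensor A χ
            ((TensorProduct.assoc K A B A).symm (a ⊗ₜ[K] χ (a' ⊗ₜ[K] b)))))) ∧
  (∀ (a : A) (b b' : B),
    χ (a ⊗ₜ[K] (b * b')) =
      rTensor A (mul' K B)
        ((TensorProduct.assoc K B B A).symm
          (lTensor B χ
            (TensorProduct.assoc K B A B (χ (a ⊗ₜ[K] b) ⊗ₜ[K] b')))))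

noncomputable def twistMul {A B : Type*} [Field K] [Ring A] [Ring B] [Algebra K A] [Algebra K B]
    (χ : A ⊗[K] B →ₗ[K] B ⊗[K] A) :
    (B ⊗[K] A) ⊗[K] (B ⊗[K] A) →ₗ[K] B ⊗[K] A :=
  TensorProduct.map (mul' K B) (mul' K A)
    ∘ₗ (TensorProduct.assoc K B B (A ⊗[K] A)).symm.toLinearMap
    ∘ₗ lTensor B (TensorProduct.assoc K B A A).toLinearMap
    ∘ₗ lTensor B (rTensor A χ)
    ∘ₗ lTensor B (TensorProduct.assoc K A B A).symm.toLinearMap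
    ∘ₗ (TensorProduct.assoc K B A (B ⊗[K] A)).toLinearMap

section Bases

variable {R M N P ι : Type*} [CommSemiring R] [AddCommMonoid M] [AddCommMonoid N]
  [AddCommMonoid P] [Module R M] [Module R N] [Module R P]

theorem TensorProduct.ext_iff_basis_right (bN : Module.Basis ι R N) {g h : M ⊗[R] N →ₗ[R] P} :
    g = h ↔ ∀ m i, g (m ⊗ₜ bN i) = h (m ⊗ₜ bN i) :=
  ⟨fun H _ _ => by rw [H], fun H => TensorProduct.ext <| LinearMap.ext fun m => bN.ext (H m)⟩

theorem TensorProduct.sum_basis_tmul_inj [Fintype ι] (bM : Module.Basis ι R M) {x y : ι → N} :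
    ∑ i, bM i ⊗ₜ[R] x i = ∑ i, bM i ⊗ₜ[R] y i ↔ x = y := by
  classical
  refine ⟨fun h => funext fun l => ?_, fun h => by rw [h]⟩
  simpa [equivFinsuppOfBasisLeft_apply_tmul_apply, Finsupp.single_apply] using
    congr(equivFinsuppOfBasisLeft bM $h l)

end Bases

section Coordinates

variable {R A B C ι κ : Type*} [CommSemiring R] [AddCommMonoid A] [AddCommMonoid B]
  [AddCommMonoid C] [Module R A] [Module R B] [Module R C] [Fintype κ]
  {e : ι → B} {c : κ → C} {f : B →ₗ[R] C} {ζ : κ → ι → R}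

theorem map_twist_tmul_eq_sum [Fintype ι] {χ : A ⊗[R] B →ₗ[R] B ⊗[R] A} {γ : ι → ι → A →ₗ[R] A}
    (hχ : ∀ a i, χ (a ⊗ₜ e i) = ∑ j, e j ⊗ₜ γ i j a) (hζ : ∀ j, f (e j) = ∑ i, ζ i j • c i)
    (a : A) (i : ι) :
    map f id (χ (a ⊗ₜ e i)) = ∑ l, c l ⊗ₜ ∑ j, ζ l j • γ i j a := by
  simp only [hχ, map_sum, map_tmul, hζ, id_coe, id_eq, sum_tmul, tmul_sum, smul_tmul]
  exact Finset.sum_comm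

theorem twist_tmul_map_eq_sum {ϖ : A ⊗[R] C →ₗ[R] C ⊗[R] A} {γ : κ → κ → A →ₗ[R] A}
    (hϖ : ∀ a k, ϖ (a ⊗ₜ c k) = ∑ l, c l ⊗ₜ γ k l a) (hζ : ∀ j, f (e j) = ∑ i, ζ i j • c i)
    (a : A) (i : ι) :
    ϖ (a ⊗ₜ f (e i)) = ∑ l, c l ⊗ₜ ∑ k, ζ k i • γ k l a := by
  simp only [hζ, tmul_sum, tmul_smul, map_sum, map_smul, hϖ, Finset.smul_sum]
  exact Finset.sum_comm

end Coordinates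

section TwistedTensorProduct

variable {A B C : Type*} [Field K] [Ring A] [Ring B] [Ring C] [Algebra K A] [Algebra K B]
  [Algebra K C]

theorem twistMul_tmul_tmul (χ : A ⊗[K] B →ₗ[K] B ⊗[K] A) (b b' : B) (a a' : A) :
    twistMul K χ ((b ⊗ₜ[K] a) ⊗ₜ[K] (b' ⊗ₜ[K] a')) =
      map (mulLeft K b) (mulRight K a') (χ (a ⊗ₜ[K] b')) := by
  suffices ∀ t : B ⊗[K] A, map (mul' K B) (mul' K A) ((TensorProduct.assoc K B B (A ⊗[K] A)).symm
      (b ⊗ₜ[K] TensorProduct.assoc K B A A (t ⊗ₜ[K] a'))) = map (mulLeft K b) (mulRight K a') t by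
    simpa [twistMul] using this _
  intro t
  induction t with
  | zero => simp
  | tmul c d => simp
  | add x y hx hy => simp_all [tmul_add, add_tmul]

theorem map_map_mulLeft_mulRight (f : B →ₐ[K] C) (b : B) (a : A) (x : B ⊗[K] A) :
    map f.toLinearMap id (map (mulLeft K b) (mulRight K a) x) =
      map (mulLeft K (f b)) (mulRight K a) (map f.toLinearMap id x) := by
  induction x with
  | zero => simp
  | tmul c d => simp
  | add x y hx hy => simp_all

theorem map_twistMul_iff_map_comp_eq (f : B →ₐ[K] C) (χ : A ⊗[K] B →ₗ[K] B ⊗[K] A)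
    (ϖ : A ⊗[K] C →ₗ[K] C ⊗[K] A) :
    (∀ x y : B ⊗[K] A, map f.toLinearMap id (twistMul K χ (x ⊗ₜ[K] y)) =
        twistMul K ϖ (map f.toLinearMap id x ⊗ₜ[K] map f.toLinearMap id y)) ↔
      map f.toLinearMap id ∘ₗ χ = ϖ ∘ₗ lTensor A f.toLinearMap := by
  constructor
  · intro h
    ext a b
    simpa [twistMul_tmul_tmul] using h (1 ⊗ₜ a) (b ⊗ₜ 1)
  · intro h x y
    have : map f.toLinearMap id ∘ₗ twistMul K χ =
        twistMul K ϖ ∘ₗ map (map f.toLinearMap id) (map f.toLinearMap id) := by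
      refine ext_fourfold' fun b a b' a' => ?_
      have hab := congr($h (a ⊗ₜ b'))
      simp only [coe_comp, Function.comp_apply, lTensor_tmul, AlgHom.toLinearMap_apply] at hab
      simp [twistMul_tmul_tmul, map_map_mulLeft_mulRight, hab]
    exact congr($this (x ⊗ₜ y))

end TwistedTensorProduct

theorem algebra_morphism_iff_matrix_intertwiner {A B C : Type*} [Field K] [Ring A] [Ring B]
    [Ring C] [Algebra K A] [Algebra K B] [Algebra K C] {n m : ℕ}
    (bB : Module.Basis (Fin n) K B) (bC : Module.Basis (Fin m) K C)
    (χ : A ⊗[K] B →ₗ[K] B ⊗[K] A) (ϖ : A ⊗[K] C →ₗ[K] C ⊗[K] A)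
    (γ : Fin n → Fin n → (A →ₗ[K] A)) (tγ : Fin m → Fin m → (A →ₗ[K] A))
    (hχ : ∀ (a : A) (i : Fin n), χ (a ⊗ₜ[K] bB i) = ∑ j : Fin n, bB j ⊗ₜ[K] γ i j a)
    (hϖ : ∀ (a : A) (i : Fin m), ϖ (a ⊗ₜ[K] bC i) = ∑ j : Fin m, bC j ⊗ₜ[K] tγ i j a)
    (f : B →ₐ[K] C) (ζ : Fin m → Fin n → K)
    (hζ : ∀ j : Fin n, f (bB j) = ∑ i : Fin m, ζ i j • bC i) :
    ((∀ x y : B ⊗[K] A,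
        TensorProduct.map f.toLinearMap LinearMap.id (twistMul K χ (x ⊗ₜ[K] y)) =
          twistMul K ϖ
            ((TensorProduct.map f.toLinearMap LinearMap.id x) ⊗ₜ[K]
              (TensorProduct.map f.toLinearMap LinearMap.id y))) ∧
      TensorProduct.map f.toLinearMap LinearMap.id ((1 : B) ⊗ₜ[K] (1 : A)) =
        (1 : C) ⊗ₜ[K] (1 : A)) ↔
      ∀ a : A,
        (Matrix.of fun j i : Fin m => tγ i j a) *
            (Matrix.of fun (i : Fin m) (j : Fin n) => algebraMap K A (ζ i j)) =
          (Matrix.of fun (i : Fin m) (j : Fin n) => algebraMap K A (ζ i j)) *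
            (Matrix.of fun j i : Fin n => γ i j a) := by
  have hunit : map f.toLinearMap id ((1 : B) ⊗ₜ[K] (1 : A)) = (1 : C) ⊗ₜ[K] (1 : A) := by simp
  rw [and_iff_left hunit, map_twistMul_iff_map_comp_eq, TensorProduct.ext_iff_basis_right bB]
  simp only [coe_comp, Function.comp_apply, lTensor_tmul,
    map_twist_tmul_eq_sum (f := f.toLinearMap) hχ hζ,
    twist_tmul_map_eq_sum (f := f.toLinearMap) hϖ hζ, TensorProduct.sum_basis_tmul_inj]
  refine forall_congr' fun a => ?_
  simp only [funext_iff, ← Matrix.ext_iff, Matrix.mul_apply, Matrix.of_apply, Algebra.smul_def,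
    Algebra.commutes]
  exact forall_comm.trans (forall₂_congr fun _ _ => eq_comm)
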